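/- Let k be a field with char k ≠ 2, and let τ act on K(x,y), where K = k(√a) with Gal(K/k) = ⟨τ restricted to K⟩, by τ(√a) = −√a, τ(x) = y, τ(y) = x. Then K(x,y)^⟨τ⟩ = k(x + y, √a(x − y)), which is purely transcendental over k. -/

import Mathlib

/-- `L` is purely transcendental over `k` of transcendence degree `m`:
it is generated over `k` by `m` algebraically independent elements. -/
def IsRationalOfDeg (k : Type) {F : Type} [Field k] [Field F] [Algebra k F]
    (L : IntermediateField k F) (m : ℕ) : Prop :=
  ∃ u : Fin m → F, (∀ i, u i ∈ L) ∧ AlgebraicIndependent k u ∧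
    L = IntermediateField.adjoin k (Set.range u)

/-!
Write `α` for the image of `√a` in `F`, `s = x + y`, `t = α(x - y)` and `L = k(s, t)`.
Since `x = (s + α⁻¹t)/2`, `y = s - x` and `K = k(√a)`, the field `F` is `L(α)` with
`α² = a ∈ L`, so `[F : L] ≤ 2`. The automorphism `τ` fixes `L` and moves `α`, so it has
order 2 and Artin's theorem gives `[F : F^τ] = 2`; together with `L ⊆ F^τ` this forces
`F^τ = L`. Finally `(x, y) ↦ (x + y, √a(x - y))` is an invertible linear substitution, so the
new generators stay algebraically independent over `K`, hence over `k`.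
-/

open IntermediateField Module

theorem Subfield.eq_top_of_adjoin_eq_top {K F : Type*} [Field K] [Field F] [Algebra K F]
    {S : Set F} (hS : adjoin K S = ⊤) {E : Subfield F} (hK : ∀ c, algebraMap K F c ∈ E)
    (hSE : S ⊆ E) : E = ⊤ := by
  refine top_unique ?_
  rw [← top_toSubfield (F := K), ← hS, adjoin_toSubfield]
  exact Subfield.closure_le.2 (Set.union_subset (Set.range_subset_iff.2 hK) hSE)

theorem algebraMap_mem_adjoin_image_of_adjoin_eq_top {k K F : Type*} [Field k] [Field K] [Field F]
    [Algebra k K] [Algebra K F] [Algebra k F] [IsScalarTower k K F] {T : Set K}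
    (hT : adjoin k T = ⊤) (c : K) : algebraMap K F c ∈ adjoin k (algebraMap K F '' T) := by
  rw [← IsScalarTower.coe_toAlgHom' k K F, ← adjoin_map, hT]
  exact (mem_map _).2 ⟨c, mem_top, rfl⟩

open Polynomial in
theorem finrank_adjoin_simple_le_of_pow_eq {L F : Type*} [Field L] [Field F] [Algebra L F]
    {α : F} {n : ℕ} (hn : n ≠ 0) {c : L} (hα : α ^ n = algebraMap L F c) :
    FiniteDimensional L L⟮α⟯ ∧ finrank L L⟮α⟯ ≤ n := by
  have hroot : aeval α (X ^ n - C c) = 0 := by simp [hα]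
  have hint : IsIntegral L α :=
    ⟨X ^ n - C c, monic_X_pow_sub_C c hn, by simpa [aeval_def] using hroot⟩
  refine ⟨adjoin.finiteDimensional hint, ?_⟩
  rw [adjoin.finrank hint]
  simpa using natDegree_le_natDegree
    (minpoly.degree_le_of_ne_zero L α (monic_X_pow_sub_C c hn).ne_zero hroot)

section FixedField

variable {k F : Type*} [Field k] [Field F] [Algebra k F]

theorem mem_fixedField_zpowers_iff {τ : F ≃ₐ[k] F} {z : F} :
    z ∈ fixedField (Subgroup.zpowers τ) ↔ τ z = z := by
  rw [mem_fixedField_iff]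
  refine ⟨fun h ↦ h τ (Subgroup.mem_zpowers τ), fun h g hg ↦ ?_⟩
  obtain ⟨j, rfl⟩ := hg
  exact MulAction.mem_fixedBy_zpow (g := τ) (a := z) h j

theorem AlgEquiv.ext_of_adjoin_simple_eq_top {L : IntermediateField k F} {α : F}
    (hα : L⟮α⟯ = ⊤) {σ τ : F ≃ₐ[k] F} (hL : ∀ z ∈ L, σ z = τ z) (hσα : σ α = τ α) : σ = τ := by
  have hclosure : Subfield.closure (Set.range (algebraMap L F) ∪ {α}) = ⊤ := by
    rw [← adjoin_toSubfield, hα, top_toSubfield]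
  have : (σ : F →+* F) = τ := RingHom.eq_of_eqOn_of_field_closure_eq_top hclosure <| by
    rintro _ (⟨z, rfl⟩ | rfl)
    exacts [hL z z.2, hσα]
  exact AlgEquiv.ext (RingHom.congr_fun this)

theorem fixedField_zpowers_eq_of_adjoin_sq_mem {L : IntermediateField k F} {α : F}
    (hα : L⟮α⟯ = ⊤) {c : L} (hαc : α ^ 2 = algebraMap L F c) {τ : F ≃ₐ[k] F}
    (hL : L ≤ fixedField (Subgroup.zpowers τ)) (hτα : τ α ≠ α) (hττα : τ (τ α) = α) :
    fixedField (Subgroup.zpowers τ) = L := by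
  have hτL : ∀ z ∈ L, τ z = z := fun z hz ↦ mem_fixedField_zpowers_iff.1 (hL hz)
  have hτ2 : τ ^ 2 = 1 := AlgEquiv.ext_of_adjoin_simple_eq_top hα
    (fun z hz ↦ by simp [sq, hτL z hz]) (by simpa [sq] using hττα)
  have hord : orderOf τ = 2 := orderOf_eq_prime hτ2 (by rintro rfl; exact hτα rfl)
  have : Fintype (Subgroup.zpowers τ) := @Fintype.ofFinite _
    (isOfFinOrder_iff_pow_eq_one.2 ⟨2, two_pos, hτ2⟩).finite_zpowers
  have hfix : finrank (fixedField (Subgroup.zpowers τ)) F = 2 := by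
    rw [← hord, ← Nat.card_zpowers, Nat.card_eq_fintype_card]
    exact FixedPoints.finrank_eq_card _ F
  obtain ⟨hfin, hrank⟩ := finrank_adjoin_simple_le_of_pow_eq two_ne_zero hαc
  have hpos : 0 < finrank L L⟮α⟯ := finrank_pos
  rw [hα, finrank_top'] at hrank hpos
  have : FiniteDimensional L F := Module.finite_of_finrank_pos hpos
  exact (eq_of_le_of_finrank_le' hL (by omega)).symm

theorem adjoin_add_mul_sub_le_fixedField {τ : F ≃ₐ[k] F} {α x y : F} (hτα : τ α = -α)
    (hx : τ x = y) (hy : τ y = x) :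
    k⟮x + y, α * (x - y)⟯ ≤ fixedField (Subgroup.zpowers τ) := by
  refine adjoin_le_iff.2 ?_
  rintro _ (rfl | rfl) <;> rw [SetLike.mem_coe, mem_fixedField_zpowers_iff]
  · rw [map_add, hx, hy, add_comm]
  · rw [map_mul, map_sub, hτα, hx, hy]
    ring

end FixedField

open MvPolynomial in
theorem AlgebraicIndependent.aeval_comp {ι K A : Type*} [CommRing K] [CommRing A] [Algebra K A]
    {v : ι → A} (hv : AlgebraicIndependent K v) {e : MvPolynomial ι K →ₐ[K] MvPolynomial ι K}
    (he : Function.Injective e) : AlgebraicIndependent K fun i ↦ aeval v (e (X i)) := by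
  have : aeval (fun i ↦ aeval v (e (X i))) = (aeval v).comp e := algHom_ext fun i ↦ by simp
  rw [algebraicIndependent_iff_injective_aeval, this, AlgHom.coe_comp]
  exact (algebraicIndependent_iff_injective_aeval.1 hv).comp he

open MvPolynomial in
theorem AlgebraicIndependent.add_smul_sub {K A : Type*} [Field K] [CommRing A] [Algebra K A]
    {x y : A} (hxy : AlgebraicIndependent K ![x, y]) {c : K} (hc : c ≠ 0) (h2 : (2 : K) ≠ 0) :
    AlgebraicIndependent K ![x + y, c • (x - y)] := by
  let e : MvPolynomial (Fin 2) K →ₐ[K] MvPolynomial (Fin 2) K :=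
    aeval ![X 0 + X 1, C c * (X 0 - X 1)]
  let e' : MvPolynomial (Fin 2) K →ₐ[K] MvPolynomial (Fin 2) K :=
    aeval ![C 2⁻¹ * (X 0 + C c⁻¹ * X 1), C 2⁻¹ * (X 0 - C c⁻¹ * X 1)]
  have he : e'.comp e = AlgHom.id K _ := by
    refine algHom_ext fun i ↦ ?_
    have h2' : (C 2⁻¹ * 2 : MvPolynomial (Fin 2) K) = 1 := by
      rw [← map_ofNat C 2, ← C_mul, inv_mul_cancel₀ h2, C_1]
    have hc' : (C c⁻¹ * C c : MvPolynomial (Fin 2) K) = 1 := by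
      rw [← C_mul, inv_mul_cancel₀ hc, C_1]
    fin_cases i <;> simp [e, e']
    · linear_combination X 0 * h2'
    · linear_combination C c⁻¹ * C c * X 1 * h2' + X 1 * hc'
  convert hxy.aeval_comp (e := e) (Function.LeftInverse.injective (g := e') (AlgHom.congr_fun he))
    using 1
  ext i
  fin_cases i <;> simp [e, Algebra.smul_def]

theorem adjoin_add_mul_sub_adjoin_eq_top {k K F : Type*} [Field k] [Field K] [Field F]
    [Algebra k K] [Algebra K F] [Algebra k F] [IsScalarTower k K F] {β : K} (hβ : k⟮β⟯ = ⊤)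
    (hβ0 : β ≠ 0) {x y : F} (hxy : K⟮x, y⟯ = ⊤) (h2 : (2 : F) ≠ 0) :
    (k⟮x + y, algebraMap K F β * (x - y)⟯)⟮algebraMap K F β⟯ = ⊤ := by
  set α := algebraMap K F β
  set L := k⟮x + y, α * (x - y)⟯
  have hα0 : α ≠ 0 := (map_ne_zero _).2 hβ0
  have hLα : ∀ z ∈ L, z ∈ L⟮α⟯ := fun z hz ↦ IntermediateField.algebraMap_mem L⟮α⟯ ⟨z, hz⟩
  have hs : x + y ∈ L⟮α⟯ := hLα _ (subset_adjoin _ _ (by simp))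
  have ht : α * (x - y) ∈ L⟮α⟯ := hLα _ (subset_adjoin _ _ (by simp))
  have hx : x ∈ L⟮α⟯ := by
    rw [show x = 2⁻¹ * ((x + y) + α⁻¹ * (α * (x - y))) by field_simp; ring]
    exact mul_mem (inv_mem (ofNat_mem _ 2))
      (add_mem hs (mul_mem (inv_mem (mem_adjoin_simple_self L α)) ht))
  have hxy_mem : {x, y} ⊆ (L⟮α⟯ : Set F) := by
    rintro _ (rfl | rfl)
    exacts [hx, by simpa using sub_mem hs hx]
  have hK (c : K) : algebraMap K F c ∈ L⟮α⟯ := by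
    have hc := algebraMap_mem_adjoin_image_of_adjoin_eq_top (F := F) hβ c
    rw [Set.image_singleton] at hc
    exact (adjoin_simple_le_iff.2 (mem_adjoin_simple_self L α) :
      k⟮α⟯ ≤ L⟮α⟯.restrictScalars k) hc
  exact toSubfield_injective
    ((Subfield.eq_top_of_adjoin_eq_top hxy hK hxy_mem).trans top_toSubfield.symm)

theorem stmt10_general (k K F : Type) [Field k] [Field K] [Field F]
    [Algebra k K] [Algebra K F] [Algebra k F] [IsScalarTower k K F]
    (h2 : (2 : k) ≠ 0) (a : k) (ha : a ≠ 0)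
    (sqa : K) (hsqa : sqa ^ 2 = algebraMap k K a)
    (hKgen : IntermediateField.adjoin k {sqa} = ⊤)
    (x y : F) (hind : AlgebraicIndependent K ![x, y])
    (hadj : IntermediateField.adjoin K {x, y} = ⊤)
    (τ : F ≃ₐ[k] F)
    (hτK : τ (algebraMap K F sqa) = - algebraMap K F sqa)
    (hx : τ x = y) (hy : τ y = x) :
    IntermediateField.fixedField (Subgroup.zpowers τ) =
      IntermediateField.adjoin k {x + y, algebraMap K F sqa * (x - y)} ∧
    IsRationalOfDeg k (IntermediateField.fixedField (Subgroup.zpowers τ)) 2 := by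
  set α := algebraMap K F sqa
  set L := k⟮x + y, α * (x - y)⟯
  have hαa : α ^ 2 = algebraMap k F a := by
    rw [← map_pow, hsqa, ← IsScalarTower.algebraMap_apply]
  have hsqa0 : sqa ≠ 0 := by
    rintro rfl
    exact ha ((map_eq_zero_iff _ (algebraMap k K).injective).1 (by rw [← hsqa]; ring))
  have h2K : (2 : K) ≠ 0 := by
    rw [← map_ofNat (algebraMap k K) 2]
    exact (map_ne_zero _).2 h2
  have h2F : (2 : F) ≠ 0 := by
    rw [← map_ofNat (algebraMap K F) 2]
    exact (map_ne_zero _).2 h2K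
  have hτα : τ α ≠ α := by
    rw [hτK, Ne, neg_eq_iff_add_eq_zero, ← two_mul]
    exact mul_ne_zero h2F ((map_ne_zero _).2 hsqa0)
  have hfix : fixedField (Subgroup.zpowers τ) = L :=
    fixedField_zpowers_eq_of_adjoin_sq_mem (adjoin_add_mul_sub_adjoin_eq_top hKgen hsqa0 hadj h2F)
      (c := ⟨_, L.algebraMap_mem a⟩) hαa (adjoin_add_mul_sub_le_fixedField hτK hx hy) hτα
      (by rw [hτK, map_neg, hτK, neg_neg])
  have hindK := hind.add_smul_sub hsqa0 h2K
  rw [Algebra.smul_def] at hindK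
  refine ⟨hfix, ![x + y, α * (x - y)], ?_, hindK.restrictScalars (algebraMap k K).injective, ?_⟩
  · rw [hfix, Fin.forall_fin_two]
    exact ⟨subset_adjoin _ _ (by simp), subset_adjoin _ _ (by simp)⟩
  · rw [hfix, Matrix.range_cons_cons_empty]

/-- For `K = k(√a)` and `τ : √a ↦ −√a, x ↦ y, y ↦ x` on `K(x,y)`, the fixed
field is `k(x + y, √a(x − y))`, which is purely transcendental over `k`. -/
theorem stmt10 (k K F : Type) [Field k] [Field K] [Field F]
    [Algebra k K] [Algebra K F] [Algebra k F] [IsScalarTower k K F]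
    (h2 : (2 : k) ≠ 0) (a : k) (ha : a ≠ 0)
    (hnsq : ¬∃ r : k, r ^ 2 = a)
    (sqa : K) (hsqa : sqa ^ 2 = algebraMap k K a)
    (hKgen : IntermediateField.adjoin k {sqa} = ⊤)
    (x y : F) (hind : AlgebraicIndependent K ![x, y])
    (hadj : IntermediateField.adjoin K {x, y} = ⊤)
    (τ : F ≃ₐ[k] F)
    (hτK : τ (algebraMap K F sqa) = - algebraMap K F sqa)
    (hx : τ x = y) (hy : τ y = x) :
    IntermediateField.fixedField (Subgroup.zpowers τ) =
      IntermediateField.adjoin k {x + y, algebraMap K F sqa * (x - y)} ∧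
    IsRationalOfDeg k (IntermediateField.fixedField (Subgroup.zpowers τ)) 2 :=
  stmt10_general k K F h2 a ha sqa hsqa hKgen x y hind hadj τ hτK hx hy
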